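/- arXiv:2309.16734 — 2 statements merged into one kernel-verified Lean document; each statement's English description precedes it below -/
import Mathlib

section
/- Any self-consistent family of regular Borel probability measures on a projective family of compact Hausdorff spaces extends to a unique regular Borel measure on the projective limit: if μ_γ = (p_{γγ'})_* μ_{γ'} for all γ' ≥ γ, then there is a unique regular Borel measure μ on the projective limit X̃ such that ∫_{X̃} (f_γ ∘ p_γ) dμ = ∫_{X_γ} f_γ dμ_γ for every γ and every continuous f_γ on X_γ. -/
/-!
For a compact set `K` in the projective limit, consistency makes `γ ↦ μ_γ (p_γ K)` decrease along
the directed set, and its infimum is a content on the compact sets. It is additive because two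
disjoint compact sets already have disjoint images at some stage (a compactness argument). Outer
regularity of the `μ_γ` makes this content regular, so it induces a regular measure `ν`, and
`ν (p_γ⁻¹ F) = μ_γ F` for closed `F`, which pins down the image of `ν` in `X_γ`.

For uniqueness: the cylindrical functions `f_γ ∘ p_γ` form a subalgebra of `C(X̃, ℝ)` that
separates points, hence is dense by Stone–Weierstrass, and a regular measure on a compact space is
determined by the integrals of continuous functions.
-/

open MeasureTheory TopologicalSpace
open scoped ENNReal

namespace MeasureTheory.Content

variable {G : Type*} [TopologicalSpace G]

noncomputable def ofENNReal (m : Compacts G → ℝ≥0∞) (hm : ∀ K, m K ≠ ∞)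
    (mono : ∀ K₁ K₂ : Compacts G, (K₁ : Set G) ⊆ K₂ → m K₁ ≤ m K₂)
    (sup_disjoint : ∀ K₁ K₂ : Compacts G, Disjoint (K₁ : Set G) K₂ →
      m (K₁ ⊔ K₂) = m K₁ + m K₂)
    (sup_le : ∀ K₁ K₂ : Compacts G, m (K₁ ⊔ K₂) ≤ m K₁ + m K₂) : Content G where
  toFun K := (m K).toNNReal
  mono' K₁ K₂ h := ENNReal.toNNReal_mono (hm K₂) (mono K₁ K₂ h)
  sup_disjoint' K₁ K₂ h _ _ := by rw [sup_disjoint K₁ K₂ h, ENNReal.toNNReal_add (hm K₁) (hm K₂)]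
  sup_le' K₁ K₂ := by
    rw [← ENNReal.toNNReal_add (hm K₁) (hm K₂)]
    exact ENNReal.toNNReal_mono (ENNReal.add_ne_top.mpr ⟨hm K₁, hm K₂⟩) (sup_le K₁ K₂)

@[simp]
lemma ofENNReal_apply {m : Compacts G → ℝ≥0∞} (hm : ∀ K, m K ≠ ∞)
    (mono sup_disjoint sup_le) (K : Compacts G) :
    ofENNReal m hm mono sup_disjoint sup_le K = m K :=
  ENNReal.coe_toNNReal (hm K)

end MeasureTheory.Content

lemma MeasureTheory.continuous_integral_continuousMap {S : Type*} [TopologicalSpace S]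
    [CompactSpace S] [MeasurableSpace S] [BorelSpace S] (ρ : Measure S) [IsFiniteMeasure ρ] :
    Continuous fun f : C(S, ℝ) => ∫ x, f x ∂ρ :=
  (continuous_integral.comp (ContinuousMap.toLp 1 ρ ℝ).continuous).congr fun f =>
    integral_congr_ae (ContinuousMap.coeFn_toLp ρ f)

theorem MeasureTheory.Measure.ext_of_forall_mem_subalgebra_integral_eq_of_compactSpace
    {S : Type*} [TopologicalSpace S] [CompactSpace S] [T2Space S] [MeasurableSpace S]
    [BorelSpace S] {ν ν' : Measure S} [ν.Regular] [ν'.Regular] {A : Subalgebra ℝ C(S, ℝ)}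
    (hA : A.SeparatesPoints) (h : ∀ f ∈ A, ∫ x, f x ∂ν = ∫ x, f x ∂ν') : ν = ν' := by
  have : IsFiniteMeasure ν := CompactSpace.isFiniteMeasure
  have : IsFiniteMeasure ν' := CompactSpace.isFiniteMeasure
  have hdense : ∀ f : C(S, ℝ), f ∈ closure (A : Set C(S, ℝ)) := fun f => by
    rw [← Subalgebra.topologicalClosure_coe,
      ContinuousMap.subalgebra_topologicalClosure_eq_top_of_separatesPoints A hA]
    trivial
  refine Measure.ext_of_integral_eq_on_compactlySupported fun f => ?_
  exact closure_minimal h (isClosed_eq (continuous_integral_continuousMap ν)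
    (continuous_integral_continuousMap ν')) (hdense f.toContinuousMap)

abbrev ProjLimit {L : Type*} [Preorder L] {X : L → Type*}
    (p : ∀ {γ γ' : L}, γ ≤ γ' → X γ' → X γ) :=
  {x : ∀ γ, X γ // ∀ (γ γ' : L) (h : γ ≤ γ'), p h (x γ') = x γ}

namespace ProjLimit

variable {L : Type*} [Preorder L] {X : L → Type*} {p : ∀ {γ γ' : L}, γ ≤ γ' → X γ' → X γ}

def proj (p : ∀ {γ γ' : L}, γ ≤ γ' → X γ' → X γ) (γ : L) (x : ProjLimit p) : X γ := x.1 γ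

lemma map_proj {γ γ' : L} (h : γ ≤ γ') (x : ProjLimit p) : p h (proj p γ' x) = proj p γ x :=
  x.2 γ γ' h

lemma comp_proj {γ γ' : L} (h : γ ≤ γ') : p h ∘ proj p γ' = proj p γ :=
  funext (map_proj h)

lemma image_proj_eq {γ γ' : L} (h : γ ≤ γ') (A : Set (ProjLimit p)) :
    proj p γ '' A = p h '' (proj p γ' '' A) := by
  rw [← comp_proj h, Set.image_comp]

lemma exists_forall_le_eq [IsDirected L (· ≤ ·)]
    (hsurj : ∀ {γ γ' : L} (h : γ ≤ γ'), Function.Surjective (p h)) {δ : L} (y : X δ) :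
    ∃ x : ∀ γ, X γ, ∀ γ (h : γ ≤ δ), x γ = p h y := by
  have : ∀ γ, ∃ z : X γ, ∀ h : γ ≤ δ, z = p h y := fun γ => by
    by_cases h : γ ≤ δ
    · exact ⟨p h y, fun _ => rfl⟩
    · obtain ⟨ε, hγ, hδ⟩ := directed_of (· ≤ ·) γ δ
      obtain ⟨z, -⟩ := hsurj hδ y
      exact ⟨p hγ z, fun h' => absurd h' h⟩
  choose x hx using this
  exact ⟨x, hx⟩

lemma disjoint_image_proj_mono {K₁ K₂ : Set (ProjLimit p)} {γ δ : L} (h : γ ≤ δ)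
    (hd : Disjoint (proj p γ '' K₁) (proj p γ '' K₂)) :
    Disjoint (proj p δ '' K₁) (proj p δ '' K₂) := by
  rw [image_proj_eq h, image_proj_eq h] at hd
  exact hd.of_image

section Topology

variable [∀ γ, TopologicalSpace (X γ)]

@[fun_prop]
lemma continuous_proj (γ : L) : Continuous (proj p γ) :=
  (continuous_apply γ).comp continuous_subtype_val

lemma exists_disjoint_image_proj [∀ γ, T2Space (X γ)] [Nonempty L] [IsDirected L (· ≤ ·)]
    {K₁ K₂ : Set (ProjLimit p)} (hK₁ : IsCompact K₁) (hK₂ : IsCompact K₂)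
    (hd : Disjoint K₁ K₂) : ∃ γ, Disjoint (proj p γ '' K₁) (proj p γ '' K₂) := by
  let Z : L → Set (ProjLimit p × ProjLimit p) := fun γ => {q | proj p γ q.1 = proj p γ q.2}
  have hZ_closed : ∀ γ, IsClosed (Z γ) := fun γ => isClosed_eq (by fun_prop) (by fun_prop)
  have hZ_anti : Antitone Z := fun γ δ h q (hq : proj p δ q.1 = proj p δ q.2) => by
    simp only [Z, Set.mem_ofPred_eq, ← map_proj h, hq]
  have hZ_empty : K₁ ×ˢ K₂ ∩ ⋂ γ, Z γ = ∅ := by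
    refine Set.eq_empty_of_forall_notMem fun ⟨x, y⟩ ⟨⟨hx, hy⟩, hxy⟩ => ?_
    have : x = y := Subtype.ext <| funext fun γ => Set.mem_iInter.mp hxy γ
    exact Set.disjoint_left.mp hd hx (this ▸ hy)
  obtain ⟨γ, hγ⟩ := (hK₁.prod hK₂).elim_directed_family_closed Z hZ_closed hZ_empty
    hZ_anti.directed_ge
  refine ⟨γ, Set.disjoint_left.mpr ?_⟩
  rintro _ ⟨x, hx, rfl⟩ ⟨y, hy, hxy⟩
  exact Set.eq_empty_iff_forall_notMem.mp hγ (x, y) ⟨⟨hx, hy⟩, hxy.symm⟩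

variable [∀ γ, CompactSpace (X γ)] [∀ γ, T2Space (X γ)]

lemma compactSpace (hcont : ∀ {γ γ' : L} (h : γ ≤ γ'), Continuous (p h)) :
    CompactSpace (ProjLimit p) := by
  refine isCompact_iff_compactSpace.mp (IsClosed.isCompact ?_)
  show IsClosed {x : ∀ γ, X γ | ∀ (γ γ' : L) (h : γ ≤ γ'), p h (x γ') = x γ}
  simp only [Set.ofPred_forall]
  exact isClosed_iInter fun γ => isClosed_iInter fun γ' => isClosed_iInter fun h =>
    isClosed_eq ((hcont h).comp (continuous_apply γ')) (continuous_apply γ)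

lemma proj_surjective [IsDirected L (· ≤ ·)]
    (hcont : ∀ {γ γ' : L} (h : γ ≤ γ'), Continuous (p h))
    (hsurj : ∀ {γ γ' : L} (h : γ ≤ γ'), Function.Surjective (p h))
    (hcomp : ∀ {γ γ' γ'' : L} (h : γ ≤ γ') (h' : γ' ≤ γ'') (x : X γ''),
      p h (p h' x) = p (h.trans h') x) (γ₀ : L) :
    Function.Surjective (proj p γ₀) := by
  intro y₀
  have : Nonempty L := ⟨γ₀⟩
  let C : L → Set (∀ γ, X γ) := fun δ => {x | x γ₀ = y₀} ∩ ⋂ (γ) (h : γ ≤ δ), {x | p h (x δ) = x γ}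
  have hC_closed : ∀ δ, IsClosed (C δ) := fun δ =>
    (isClosed_eq (continuous_apply γ₀) continuous_const).inter <|
      isClosed_iInter fun γ => isClosed_iInter fun h =>
        isClosed_eq ((hcont h).comp (continuous_apply δ)) (continuous_apply γ)
  have hC_anti : Antitone C := by
    rintro δ δ' hδ x ⟨hx₀, hx⟩
    refine ⟨hx₀, Set.mem_iInter₂.mpr fun γ h => ?_⟩
    have hx := Set.mem_iInter₂.mp hx
    rw [Set.mem_ofPred_eq, ← hx δ hδ, hcomp, hx]
  have hC_nonempty : ∀ δ, (C δ).Nonempty := by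
    intro δ
    obtain ⟨ε, hγ₀, hδ⟩ := directed_of (· ≤ ·) γ₀ δ
    obtain ⟨y, rfl⟩ := hsurj hγ₀ y₀
    obtain ⟨x, hx⟩ := exists_forall_le_eq hsurj y
    refine ⟨x, hx γ₀ hγ₀, Set.mem_iInter₂.mpr fun γ h => ?_⟩
    rw [Set.mem_ofPred_eq, hx δ hδ, hx γ (h.trans hδ), hcomp]
  obtain ⟨x, hx⟩ := IsCompact.nonempty_iInter_of_directed_nonempty_isCompact_isClosed C
    hC_anti.directed_ge hC_nonempty (fun δ => (hC_closed δ).isCompact) hC_closed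
  simp only [Set.mem_iInter] at hx
  refine ⟨⟨x, fun γ γ' h => ?_⟩, (hx γ₀).1⟩
  exact Set.mem_iInter₂.mp (hx γ').2 γ h

end Topology

section Measure

variable [∀ γ, MeasurableSpace (X γ)] {μ : ∀ γ, Measure (X γ)}

noncomputable def iInfMeasureImage (μ : ∀ γ, Measure (X γ)) (K : Set (ProjLimit p)) : ℝ≥0∞ :=
  ⨅ γ, μ γ (proj p γ '' K)

lemma iInfMeasureImage_mono {A B : Set (ProjLimit p)} (h : A ⊆ B) :
    iInfMeasureImage μ A ≤ iInfMeasureImage μ B :=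
  iInf_mono fun _ => measure_mono (Set.image_mono h)

lemma iInfMeasureImage_ne_top [Nonempty L] [∀ γ, IsFiniteMeasure (μ γ)] (K : Set (ProjLimit p)) :
    iInfMeasureImage μ K ≠ ∞ :=
  ne_top_of_le_ne_top (measure_ne_top (μ (Classical.arbitrary L)) _) (iInf_le _ _)

variable [∀ γ, TopologicalSpace (X γ)] [∀ γ, T2Space (X γ)] [∀ γ, BorelSpace (X γ)]
  (hcont : ∀ {γ γ' : L} (h : γ ≤ γ'), Continuous (p h))
  (hcons : ∀ (γ γ' : L) (h : γ ≤ γ'), (μ γ').map (p h) = μ γ)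
include hcont hcons

lemma measure_image_proj_anti {K : Set (ProjLimit p)} (hK : IsCompact K) {γ δ : L} (h : γ ≤ δ) :
    μ δ (proj p δ '' K) ≤ μ γ (proj p γ '' K) := by
  rw [← hcons γ δ h, Measure.map_apply (hcont h).measurable
    (hK.image (continuous_proj γ)).isClosed.measurableSet, image_proj_eq h]
  exact measure_mono (Set.subset_preimage_image _ _)

variable [IsDirected L (· ≤ ·)]

lemma iInfMeasureImage_add {K₁ K₂ : Set (ProjLimit p)} (hK₁ : IsCompact K₁) (hK₂ : IsCompact K₂) :
    iInfMeasureImage μ K₁ + iInfMeasureImage μ K₂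
      = ⨅ γ, μ γ (proj p γ '' K₁) + μ γ (proj p γ '' K₂) := by
  refine ENNReal.iInf_add_iInf fun γ₁ γ₂ => ?_
  obtain ⟨δ, h₁, h₂⟩ := directed_of (· ≤ ·) γ₁ γ₂
  exact ⟨δ, add_le_add (measure_image_proj_anti hcont hcons hK₁ h₁)
    (measure_image_proj_anti hcont hcons hK₂ h₂)⟩

lemma iInfMeasureImage_union_le {K₁ K₂ : Set (ProjLimit p)} (hK₁ : IsCompact K₁)
    (hK₂ : IsCompact K₂) :
    iInfMeasureImage μ (K₁ ∪ K₂) ≤ iInfMeasureImage μ K₁ + iInfMeasureImage μ K₂ := by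
  rw [iInfMeasureImage_add hcont hcons hK₁ hK₂]
  exact iInf_mono fun γ => by rw [Set.image_union]; exact measure_union_le _ _

lemma iInfMeasureImage_union [Nonempty L] {K₁ K₂ : Set (ProjLimit p)} (hK₁ : IsCompact K₁)
    (hK₂ : IsCompact K₂) (hd : Disjoint K₁ K₂) :
    iInfMeasureImage μ (K₁ ∪ K₂) = iInfMeasureImage μ K₁ + iInfMeasureImage μ K₂ := by
  refine le_antisymm (iInfMeasureImage_union_le hcont hcons hK₁ hK₂) ?_
  rw [iInfMeasureImage_add hcont hcons hK₁ hK₂]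
  obtain ⟨γ₀, hγ₀⟩ := exists_disjoint_image_proj hK₁ hK₂ hd
  refine le_iInf fun γ => ?_
  obtain ⟨δ, hγ₀δ, hγδ⟩ := directed_of (· ≤ ·) γ₀ γ
  calc ⨅ γ, μ γ (proj p γ '' K₁) + μ γ (proj p γ '' K₂)
      ≤ μ δ (proj p δ '' K₁) + μ δ (proj p δ '' K₂) := iInf_le _ δ
    _ = μ δ (proj p δ '' (K₁ ∪ K₂)) := by
      rw [Set.image_union, measure_union (disjoint_image_proj_mono hγ₀δ hγ₀)
        (hK₂.image (continuous_proj δ)).isClosed.measurableSet]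
    _ ≤ μ γ (proj p γ '' (K₁ ∪ K₂)) := measure_image_proj_anti hcont hcons (hK₁.union hK₂) hγδ

lemma iInfMeasureImage_preimage_proj [CompactSpace (ProjLimit p)]
    (hproj : ∀ γ, Function.Surjective (proj p γ)) {γ : L} {F : Set (X γ)} (hF : IsClosed F) :
    iInfMeasureImage μ (proj p γ ⁻¹' F) = μ γ F := by
  have hK : IsCompact (proj p γ ⁻¹' F) := (hF.preimage (continuous_proj γ)).isCompact
  refine le_antisymm ((iInf_le _ γ).trans_eq (by rw [Set.image_preimage_eq F (hproj γ)])) ?_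
  refine le_iInf fun δ => ?_
  obtain ⟨ε, hγε, hδε⟩ := directed_of (· ≤ ·) γ δ
  have himage : proj p ε '' (proj p γ ⁻¹' F) = p hγε ⁻¹' F := by
    rw [← comp_proj hγε, Set.preimage_comp, Set.image_preimage_eq _ (hproj ε)]
  calc μ γ F = μ ε (proj p ε '' (proj p γ ⁻¹' F)) := by
        rw [himage, ← Measure.map_apply (hcont hγε).measurable hF.measurableSet, hcons]
    _ ≤ μ δ (proj p δ '' (proj p γ ⁻¹' F)) := measure_image_proj_anti hcont hcons hK hδε

variable [Nonempty L] [∀ γ, IsFiniteMeasure (μ γ)]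

noncomputable def content : Content (ProjLimit p) :=
  .ofENNReal (fun K => iInfMeasureImage μ (K : Set (ProjLimit p)))
    (fun _ => iInfMeasureImage_ne_top _)
    (fun _ _ h => iInfMeasureImage_mono h)
    (fun K₁ K₂ hd => iInfMeasureImage_union hcont hcons K₁.isCompact K₂.isCompact hd)
    (fun K₁ K₂ => iInfMeasureImage_union_le hcont hcons K₁.isCompact K₂.isCompact)

lemma content_apply (K : Compacts (ProjLimit p)) :
    content hcont hcons K = iInfMeasureImage μ (K : Set (ProjLimit p)) :=
  Content.ofENNReal_apply _ _ _ _ _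

lemma contentRegular_content [∀ γ, LocallyCompactSpace (X γ)] [CompactSpace (ProjLimit p)]
    [∀ γ, (μ γ).OuterRegular] :
    (content hcont hcons).ContentRegular := by
  intro K
  simp only [content_apply]
  refine le_antisymm (le_iInf₂ fun K' hK' => iInfMeasureImage_mono (hK'.trans interior_subset)) ?_
  refine ENNReal.le_of_forall_pos_le_add fun ε hε _ => ?_
  obtain ⟨γ, hγ⟩ : ∃ γ, μ γ (proj p γ '' K) < iInfMeasureImage μ (K : Set (ProjLimit p)) + ε :=
    iInf_lt_iff.mp <| ENNReal.lt_add_right (iInfMeasureImage_ne_top _)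
      (ENNReal.coe_ne_zero.mpr hε.ne')
  obtain ⟨U, hKU, hU, hμU⟩ := Set.exists_isOpen_lt_of_lt _ _ hγ
  obtain ⟨C, hC, hKC, hCU⟩ := exists_compact_between (K.isCompact.image (continuous_proj γ)) hU hKU
  let K' : Compacts (ProjLimit p) :=
    ⟨proj p γ ⁻¹' C, (hC.isClosed.preimage (continuous_proj γ)).isCompact⟩
  have hKK' : (K : Set (ProjLimit p)) ⊆ interior K' :=
    (Set.image_subset_iff.mp hKC).trans (preimage_interior_subset_interior_preimage
      (continuous_proj γ))
  calc ⨅ (K' : Compacts (ProjLimit p)) (_ : (K : Set (ProjLimit p)) ⊆ interior K'),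
        iInfMeasureImage μ (K' : Set (ProjLimit p))
      ≤ iInfMeasureImage μ (proj p γ ⁻¹' C) := iInf₂_le K' hKK'
    _ ≤ μ γ (proj p γ '' (proj p γ ⁻¹' C)) := iInf_le _ γ
    _ ≤ μ γ U := measure_mono ((Set.image_preimage_subset _ _).trans hCU)
    _ ≤ iInfMeasureImage μ (K : Set (ProjLimit p)) + ε := hμU.le

end Measure

theorem exists_regular_map_proj_eq [IsDirected L (· ≤ ·)] [Nonempty L]
    [∀ γ, TopologicalSpace (X γ)] [∀ γ, CompactSpace (X γ)] [∀ γ, T2Space (X γ)]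
    [∀ γ, MeasurableSpace (X γ)] [∀ γ, BorelSpace (X γ)] [MeasurableSpace (ProjLimit p)]
    [BorelSpace (ProjLimit p)] {μ : ∀ γ, Measure (X γ)}
    [∀ γ, IsFiniteMeasure (μ γ)] [∀ γ, (μ γ).OuterRegular]
    (hcont : ∀ {γ γ' : L} (h : γ ≤ γ'), Continuous (p h))
    (hsurj : ∀ {γ γ' : L} (h : γ ≤ γ'), Function.Surjective (p h))
    (hcomp : ∀ {γ γ' γ'' : L} (h : γ ≤ γ') (h' : γ' ≤ γ'') (x : X γ''),
      p h (p h' x) = p (h.trans h') x)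
    (hcons : ∀ (γ γ' : L) (h : γ ≤ γ'), (μ γ').map (p h) = μ γ) :
    ∃ ν : Measure (ProjLimit p), ν.Regular ∧ ∀ γ, ν.map (proj p γ) = μ γ := by
  have := compactSpace hcont
  let ν := (content hcont hcons).measure
  have hν_compact : ∀ K : Compacts (ProjLimit p),
      ν K = iInfMeasureImage μ (K : Set (ProjLimit p)) := fun K => by
    rw [Content.measure_eq_content_of_regular _ (contentRegular_content hcont hcons) K,
      content_apply]
  have hν_closed : ∀ γ F, IsClosed F → ν.map (proj p γ) F = μ γ F := fun γ F hF => by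
    rw [Measure.map_apply (continuous_proj γ).measurable hF.measurableSet]
    exact (hν_compact ⟨_, (hF.preimage (continuous_proj γ)).isCompact⟩).trans
      (iInfMeasureImage_preimage_proj hcont hcons (proj_surjective hcont hsurj hcomp) hF)
  have : IsFiniteMeasure ν := CompactSpace.isFiniteMeasure
  refine ⟨ν, inferInstance, fun γ => ?_⟩
  exact ext_of_generate_finite {F | IsClosed F} ((BorelSpace.measurable_eq).trans
    borel_eq_generateFrom_isClosed) isPiSystem_isClosed (hν_closed γ) (hν_closed γ _ isClosed_univ)

section Uniqueness

variable [∀ γ, TopologicalSpace (X γ)]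

def cylinderSubalgebra (p : ∀ {γ γ' : L}, γ ≤ γ' → X γ' → X γ) :
    Subalgebra ℝ C(ProjLimit p, ℝ) :=
  ⨆ γ, (ContinuousMap.compRightAlgHom ℝ ℝ ⟨proj p γ, continuous_proj γ⟩).range

lemma exists_eq_comp_proj_of_mem_cylinderSubalgebra [Nonempty L] [IsDirected L (· ≤ ·)]
    (hcont : ∀ {γ γ' : L} (h : γ ≤ γ'), Continuous (p h)) {f : C(ProjLimit p, ℝ)}
    (hf : f ∈ cylinderSubalgebra p) : ∃ γ, ∃ g : C(X γ, ℝ), ∀ x, f x = g (proj p γ x) := by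
  have hmono : Monotone fun γ =>
      (ContinuousMap.compRightAlgHom ℝ ℝ ⟨proj p γ, continuous_proj (p := p) γ⟩).range := by
    rintro γ δ h _ ⟨g, rfl⟩
    exact ⟨g.comp ⟨p h, hcont h⟩, ContinuousMap.ext fun x => congrArg g (map_proj h x)⟩
  rw [cylinderSubalgebra, ← SetLike.mem_coe, Subalgebra.coe_iSup_of_directed hmono.directed_le]
    at hf
  obtain ⟨γ, g, rfl⟩ := Set.mem_iUnion.mp hf
  exact ⟨γ, g, fun _ => rfl⟩

lemma cylinderSubalgebra_separatesPoints [∀ γ, T35Space (X γ)] :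
    (cylinderSubalgebra p).SeparatesPoints := by
  intro x y hxy
  obtain ⟨γ, hγ⟩ : ∃ γ, proj p γ x ≠ proj p γ y := by
    by_contra! h
    exact hxy (Subtype.ext (funext h))
  obtain ⟨g, hg, hgxy⟩ := separatesPoints_continuous_of_t35Space hγ
  refine ⟨_, ⟨ContinuousMap.comp ⟨g, hg⟩ ⟨proj p γ, continuous_proj γ⟩, ?_, rfl⟩, hgxy⟩
  exact (le_iSup (fun γ => (ContinuousMap.compRightAlgHom ℝ ℝ
    ⟨proj p γ, continuous_proj (p := p) γ⟩).range) γ) ⟨⟨g, hg⟩, rfl⟩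

theorem ext_of_forall_integral_comp_proj_eq [Nonempty L] [IsDirected L (· ≤ ·)]
    [∀ γ, T35Space (X γ)] [CompactSpace (ProjLimit p)] [MeasurableSpace (ProjLimit p)]
    [BorelSpace (ProjLimit p)] (hcont : ∀ {γ γ' : L} (h : γ ≤ γ'), Continuous (p h))
    {ν ν' : Measure (ProjLimit p)} [ν.Regular] [ν'.Regular]
    (h : ∀ γ (f : X γ → ℝ), Continuous f →
      ∫ x, f (proj p γ x) ∂ν = ∫ x, f (proj p γ x) ∂ν') : ν = ν' := by
  refine Measure.ext_of_forall_mem_subalgebra_integral_eq_of_compactSpace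
    cylinderSubalgebra_separatesPoints fun f hf => ?_
  obtain ⟨γ, g, hfg⟩ := exists_eq_comp_proj_of_mem_cylinderSubalgebra hcont hf
  simpa only [hfg] using h γ g g.continuous

end Uniqueness

end ProjLimit

/-- Any self-consistent family of regular Borel probability measures on a projective family of
compact Hausdorff spaces extends to a unique regular Borel measure on the projective limit:
if `μ_γ = (p_{γγ'})_* μ_{γ'}` for all `γ' ≥ γ`, then there is a unique regular Borel measure `ν`
on the projective limit such that `∫ (f_γ ∘ p_γ) dν = ∫ f_γ dμ_γ` for every `γ` and every
continuous `f_γ`. -/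
theorem stmt_7 {L : Type*} [PartialOrder L] [IsDirected L (· ≤ ·)] [Nonempty L]
    (X : L → Type*) [∀ γ, TopologicalSpace (X γ)] [∀ γ, CompactSpace (X γ)]
    [∀ γ, T2Space (X γ)] [∀ γ, MeasurableSpace (X γ)] [∀ γ, BorelSpace (X γ)]
    (p : ∀ {γ γ' : L}, γ ≤ γ' → X γ' → X γ)
    (hcont : ∀ {γ γ' : L} (h : γ ≤ γ'), Continuous (p h))
    (hsurj : ∀ {γ γ' : L} (h : γ ≤ γ'), Function.Surjective (p h))
    (hcomp : ∀ {γ γ' γ'' : L} (h : γ ≤ γ') (h' : γ' ≤ γ'') (x : X γ''),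
      p h (p h' x) = p (h.trans h') x)
    (μ : ∀ γ, Measure (X γ)) (hprob : ∀ γ, IsProbabilityMeasure (μ γ))
    (hreg : ∀ γ, (μ γ).Regular)
    (hcons : ∀ (γ γ' : L) (h : γ ≤ γ'), (μ γ').map (p h) = μ γ) :
    letI S := {x : ∀ γ, X γ // ∀ (γ γ' : L) (h : γ ≤ γ'), p h (x γ') = x γ}
    letI : MeasurableSpace S := borel S
    ∃! ν : Measure S, ν.Regular ∧
      ∀ (γ : L) (f : X γ → ℝ), Continuous f →
        ∫ x : S, f (x.1 γ) ∂ν = ∫ y, f y ∂(μ γ) := by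
  let : MeasurableSpace (ProjLimit p) := borel _
  have : BorelSpace (ProjLimit p) := ⟨rfl⟩
  have := ProjLimit.compactSpace hcont
  obtain ⟨ν, hν_reg, hν_map⟩ := ProjLimit.exists_regular_map_proj_eq hcont hsurj hcomp hcons
  have hν : ∀ (γ : L) (f : X γ → ℝ), Continuous f →
      ∫ x : ProjLimit p, f (x.1 γ) ∂ν = ∫ y, f y ∂(μ γ) := fun γ f hf => by
    rw [← hν_map γ, integral_map (ProjLimit.continuous_proj γ).aemeasurable hf.aestronglyMeasurable]
    rfl
  refine ⟨ν, ⟨hν_reg, hν⟩, fun ν' ⟨_, hν'⟩ => ?_⟩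
  exact ProjLimit.ext_of_forall_integral_comp_proj_eq hcont fun γ f hf =>
    (hν' γ f hf).trans (hν γ f hf).symm
end

section
/- The function χ(x) = exp(−½⟨x, Cx⟩) on a real inner product space is of positive type: for any c₁,…,cₙ ∈ ℂ and v₁,…,vₙ in the space, ∑_{k,l} c_k c̄_l χ(v_k − v_l) ≥ 0, where C is a positive-definite symmetric bilinear form. -/
/-!
Writing `G k l = C (v k) (v l)` for the Gram matrix, which is positive semidefinite, the Gaussian
kernel factors as `exp (-½ C (v k - v l) (v k - v l)) = t k * exp (G k l) * t l` with
`t k = exp (-½ C (v k) (v k))`. By the Schur product theorem every Hadamard power of `G` is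
positive semidefinite, hence so is the entrywise exponential `∑ₘ G^{⊙m} / m!`, and so is its
Hadamard product with the rank-one matrix `t tᵀ`.
-/

open Matrix
open scoped ComplexOrder

namespace Matrix

variable {ι : Type*} [Fintype ι]

theorem star_dotProduct_mulVec_eq_sum {R : Type*} [CommSemiring R] [StarRing R]
    (M : Matrix ι ι R) (x : ι → R) :
    star x ⬝ᵥ (M *ᵥ x) = ∑ k, ∑ l, star x k * x l * M k l := by
  simp only [dotProduct, mulVec, Finset.mul_sum, Pi.star_apply]
  exact Finset.sum_congr rfl fun k _ => Finset.sum_congr rfl fun l _ => by ring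

theorem PosSemidef.map_ofReal {𝕜 : Type*} [RCLike 𝕜] {A : Matrix ι ι ℝ}
    (hA : A.PosSemidef) : (A.map ((↑) : ℝ → 𝕜)).PosSemidef := by
  classical
  open scoped MatrixOrder in
  obtain ⟨B, rfl⟩ := CStarAlgebra.nonneg_iff_eq_star_mul_self.mp hA.nonneg
  have hstar : (star B).map ((↑) : ℝ → 𝕜) = (B.map ((↑) : ℝ → 𝕜))ᴴ := by
    rw [star_eq_conjTranspose, conjTranspose_map _ fun x => (RCLike.conj_ofReal x).symm]
  rw [Matrix.map_mul, hstar]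
  exact posSemidef_conjTranspose_mul_self _

theorem PosSemidef.map_pow {𝕜 : Type*} [RCLike 𝕜] {A : Matrix ι ι 𝕜} (hA : A.PosSemidef) :
    ∀ m : ℕ, (A.map (· ^ m)).PosSemidef
  | 0 => by
    simpa [vecMulVec, Matrix.map] using posSemidef_vecMulVec_self_star (fun _ : ι => (1 : 𝕜))
  | m + 1 => by
    have hsucc : A.map (· ^ (m + 1)) = A.map (· ^ m) ⊙ A := by ext; simp [pow_succ]
    exact hsucc ▸ (hA.map_pow m).hadamard hA

theorem PosSemidef.map_exp {A : Matrix ι ι ℝ} (hA : A.PosSemidef) :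
    (A.map Real.exp).PosSemidef := by
  refine posSemidef_iff_dotProduct_mulVec.mpr ⟨hA.isHermitian.map _ fun _ => rfl, fun x => ?_⟩
  have hseries : HasSum (fun m : ℕ => ∑ k, ∑ l, x k * x l * (A k l ^ m / m.factorial))
      (∑ k, ∑ l, x k * x l * Real.exp (A k l)) :=
    hasSum_sum fun k _ => hasSum_sum fun l _ => by
      rw [Real.exp_eq_exp_ℝ]
      exact (NormedSpace.expSeries_div_hasSum_exp (A k l)).mul_left (x k * x l)
  rw [star_dotProduct_mulVec_eq_sum]
  refine hseries.nonneg fun m => ?_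
  have hm := (posSemidef_iff_dotProduct_mulVec.mp (hA.map_pow m)).2 x
  rw [star_dotProduct_mulVec_eq_sum] at hm
  simpa only [map_apply, star_trivial, mul_div_assoc', ← Finset.sum_div] using
    div_nonneg hm (Nat.cast_nonneg m.factorial)

end Matrix

namespace LinearMap.BilinForm

variable {V : Type*} [AddCommGroup V] [Module ℝ V] (C : LinearMap.BilinForm ℝ V)

theorem posSemidef_gram (hsymm : ∀ x y, C x y = C y x) (hnonneg : ∀ x, 0 ≤ C x x)
    {ι : Type*} [Fintype ι] (v : ι → V) : (Matrix.of fun k l => C (v k) (v l)).PosSemidef := by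
  refine posSemidef_iff_dotProduct_mulVec.mpr ⟨?_, fun y => ?_⟩
  · ext k l
    exact hsymm _ _
  refine (hnonneg (∑ k, y k • v k)).trans_eq ?_
  rw [star_dotProduct_mulVec_eq_sum]
  simp only [star_trivial, of_apply, map_sum, map_smul,
    LinearMap.sum_apply, LinearMap.smul_apply, smul_eq_mul, Finset.mul_sum]
  exact Finset.sum_congr rfl fun k _ => Finset.sum_congr rfl fun l _ => by rw [hsymm]; ring

theorem exp_neg_half_apply_sub (hsymm : ∀ x y, C x y = C y x) (x y : V) :
    Real.exp (-(1 / 2) * C (x - y) (x - y)) =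
      Real.exp (-(1 / 2) * C x x) * Real.exp (C x y) * Real.exp (-(1 / 2) * C y y) := by
  rw [← Real.exp_add, ← Real.exp_add]
  congr 1
  simp only [map_sub, LinearMap.sub_apply, hsymm y x]
  ring

end LinearMap.BilinForm

/-- The function `χ(x) = exp(−½⟨x, Cx⟩)` on a real vector space equipped with a positive-definite
symmetric bilinear form `C` is of positive type: for any `c₁,…,cₙ ∈ ℂ` and `v₁,…,vₙ` in the
space, `∑_{k,l} c_k c̄_l χ(v_k − v_l)` is a nonnegative real number. -/
theorem stmt_10 {V : Type*} [AddCommGroup V] [Module ℝ V]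
    (C : V →ₗ[ℝ] V →ₗ[ℝ] ℝ)
    (hsymm : ∀ x y, C x y = C y x)
    (hpos : ∀ x, x ≠ 0 → 0 < C x x)
    (n : ℕ) (c : Fin n → ℂ) (v : Fin n → V) :
    ∃ r : ℝ, 0 ≤ r ∧
      (∑ k, ∑ l, c k * (starRingEnd ℂ) (c l) *
          (Real.exp (-(1 / 2) * C (v k - v l) (v k - v l)) : ℝ)) = (r : ℂ) := by
  have hnonneg : ∀ x, 0 ≤ C x x := fun x => by
    rcases eq_or_ne x 0 with rfl | hx
    · simp
    · exact (hpos x hx).le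
  set t : Fin n → ℝ := fun k => Real.exp (-(1 / 2) * C (v k) (v k))
  have hkernel :
      ((Matrix.of fun k l => C (v k) (v l)).map Real.exp ⊙ vecMulVec t t).PosSemidef :=
    (LinearMap.BilinForm.posSemidef_gram C hsymm hnonneg v).map_exp.hadamard
      (by simpa using posSemidef_vecMulVec_self_star t)
  have hQ := (posSemidef_iff_dotProduct_mulVec.mp (hkernel.map_ofReal (𝕜 := ℂ))).2 (star c)
  rw [star_dotProduct_mulVec_eq_sum] at hQ
  obtain ⟨r, hr, hr_eq⟩ := RCLike.nonneg_iff_exists_ofReal.mp hQ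
  refine ⟨r, hr, Eq.trans ?_ hr_eq.symm⟩
  refine Finset.sum_congr rfl fun k _ => Finset.sum_congr rfl fun l _ => ?_
  rw [LinearMap.BilinForm.exp_neg_half_apply_sub C hsymm]
  simp only [map_apply, hadamard_apply, vecMulVec_apply, of_apply, t, Complex.conj_conj,
    RCLike.ofReal_eq_complex_ofReal, Pi.star_apply, Complex.star_def]
  push_cast
  ring
end
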